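/- Let N = [[0, κ e₁ᵀ], [Re₁, -a_T R⌊e₁⌋]] be the 4×4 matrix with R ∈ SO(3), κ = ‖z_fix × (v̇ - g)‖, a_T ∈ ℝ, e₁ = (1,0,0)ᵀ. Then det(N) = -a_T² κ. In particular N is invertible iff a_T ≠ 0 and z_fix × (v̇ - g) ≠ 0. -/

import Mathlib

open Matrix Real

noncomputable def norm3 (v : Fin 3 → ℝ) : ℝ := Real.sqrt (v ⬝ᵥ v)

def skew (a : Fin 3 → ℝ) : Matrix (Fin 3) (Fin 3) ℝ :=
  !![0, -a 2, a 1; a 2, 0, -a 0; -a 1, a 0, 0]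

def e1 : Fin 3 → ℝ := ![1, 0, 0]

/-! Writing `N = diag(1, R) · N₀` with `N₀ = [[0, κ e₁ᵀ], [e₁, -a_T ⌊e₁⌋]]` gives
`det N = det R · det N₀ = det N₀`, and the explicit 4 × 4 determinant `det N₀` is `-a_T² κ`.
Since `κ` is a Euclidean norm, it vanishes exactly when `z_fix × (v̇ - g)` does. -/

lemma norm3_eq_zero_iff {v : Fin 3 → ℝ} : norm3 v = 0 ↔ v = 0 := by
  have hv : 0 ≤ v ⬝ᵥ v := Finset.sum_nonneg fun i _ => mul_self_nonneg (v i)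
  rw [norm3, Real.sqrt_eq_zero hv, dotProduct_self_eq_zero]

namespace Matrix

variable {l m α : Type*} [Fintype l] [Fintype m] [DecidableEq l]

theorem fromBlocks_zero₁₁_mul_left [Semiring α] (A : Matrix m m α) (B : Matrix l m α)
    (C : Matrix m l α) (D : Matrix m m α) :
    fromBlocks 0 B (A * C) (A * D) = fromBlocks 1 0 0 A * fromBlocks 0 B C D := by
  simp [fromBlocks_multiply]

theorem det_fromBlocks_zero₁₁_mul_left [CommRing α] [DecidableEq m] (A : Matrix m m α)
    (B : Matrix l m α) (C : Matrix m l α) (D : Matrix m m α) :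
    (fromBlocks 0 B (A * C) (A * D)).det = A.det * (fromBlocks 0 B C D).det := by
  rw [fromBlocks_zero₁₁_mul_left, det_mul, det_fromBlocks_zero₂₁, det_one, one_mul]

end Matrix

theorem det_fromBlocks_e1_skew_e1 (κ aT : ℝ) :
    (fromBlocks 0 (of fun (_ : Fin 1) j => κ * e1 j) (of fun i (_ : Fin 1) => e1 i)
      (-aT • skew e1)).det = -aT ^ 2 * κ := by
  rw [← det_reindex_self finSumFinEquiv]
  simp [det_succ_row_zero, Fin.sum_univ_succ, fromBlocks, finSumFinEquiv, Fin.addCases,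
    Fin.succAbove, e1, skew]
  ring

theorem det_N_zero_airspeed_general (R : Matrix (Fin 3) (Fin 3) ℝ)
    (hRdet : R.det = 1)
    (aT : ℝ) (zfix vdot g : Fin 3 → ℝ)
    (κ : ℝ) (hκ : κ = norm3 (zfix ⨯₃ (vdot - g)))
    (N : Matrix (Fin 1 ⊕ Fin 3) (Fin 1 ⊕ Fin 3) ℝ)
    (hN : N = Matrix.fromBlocks 0
      (Matrix.of fun _ j => κ * e1 j)
      (Matrix.of fun i _ => (R *ᵥ e1) i)
      (-aT • (R * skew e1))) :
    N.det = -aT ^ 2 * κ ∧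
      (N.det ≠ 0 ↔ aT ≠ 0 ∧ zfix ⨯₃ (vdot - g) ≠ 0) := by
  have hcol : (of fun i (_ : Fin 1) => (R *ᵥ e1) i) = R * of fun i _ => e1 i :=
    replicateCol_mulVec R e1
  have hdet : N.det = -aT ^ 2 * κ := by
    rw [hN, hcol, ← Matrix.mul_smul, det_fromBlocks_zero₁₁_mul_left, hRdet, one_mul,
      det_fromBlocks_e1_skew_e1]
  refine ⟨hdet, ?_⟩
  rw [hdet, hκ, mul_ne_zero_iff, neg_ne_zero, pow_ne_zero_iff two_ne_zero]
  exact and_congr_right' (not_congr norm3_eq_zero_iff)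

/-- Theorem 3 of the paper: for the zero-airspeed singularity
case, `N = [[0, κ e₁ᵀ], [Re₁, -a_T R⌊e₁⌋]]` with `κ = ‖z_fix × (v̇ - g)‖`
satisfies `det N = -a_T² κ`; in particular `N` is invertible iff `a_T ≠ 0`
and `z_fix × (v̇ - g) ≠ 0`. -/
theorem det_N_zero_airspeed (R : Matrix (Fin 3) (Fin 3) ℝ)
    (hR : Rᵀ * R = 1) (hRdet : R.det = 1)
    (aT : ℝ) (zfix vdot g : Fin 3 → ℝ)
    (κ : ℝ) (hκ : κ = norm3 (zfix ⨯₃ (vdot - g)))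
    (N : Matrix (Fin 1 ⊕ Fin 3) (Fin 1 ⊕ Fin 3) ℝ)
    (hN : N = Matrix.fromBlocks 0
      (Matrix.of fun _ j => κ * e1 j)
      (Matrix.of fun i _ => (R *ᵥ e1) i)
      (-aT • (R * skew e1))) :
    N.det = -aT ^ 2 * κ ∧
      (N.det ≠ 0 ↔ aT ≠ 0 ∧ zfix ⨯₃ (vdot - g) ≠ 0) :=
  det_N_zero_airspeed_general R hRdet aT zfix vdot g κ hκ N hN
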